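/- For every constant integer k ≥ 2 there exists a constant C > 0 such that, for all positive integer multiples n of k, the expected runtime (number of iterations until the all-ones string is first generated) of the Lamarckian (1+1) EA with best-improvement local search on DLB_k over {0,1}^n is at most C·n^{k}. -/

import Mathlib

open Finset
open scoped ENNReal

noncomputable section

/-- Bit strings of length `n`. -/
abbrev BitStr (n : ℕ) := Fin n → Bool

/-- The all-ones string. -/
def allOnes (n : ℕ) : BitStr n := fun _ => true

/-- The number of ones in the `ℓ`-th block (`0`-indexed), i.e. among the
(`0`-indexed) positions `ℓ*k, …, ℓ*k + k - 1`. -/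
def blockOnes (k n : ℕ) (x : BitStr n) (ℓ : ℕ) : ℕ :=
  (Finset.univ.filter fun i : Fin n => ℓ * k ≤ i.1 ∧ i.1 < ℓ * k + k ∧ x i = true).card

/-- The number of leading all-ones blocks of `x` (at most `n / k`).  For
`x ≠ allOnes n` (and `k ∣ n`) this is `c(x) - 1`, the (`0`-indexed) index of the
critical block. -/
def leadBlocks (k n : ℕ) (x : BitStr n) : ℕ :=
  Nat.findGreatest (fun j => ∀ ℓ < j, blockOnes k n x ℓ = k) (n / k)

/-- The DeceptiveLeadingBlocks function with block length `k`:
`DLB_k(x) = k (c(x) - 1) + (k - 1 - ‖x_{B_{c(x)}}‖₁)` for `x` not the all-ones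
string, and `DLB_k` of the all-ones string is `n`. -/
def dlb (k n : ℕ) (x : BitStr n) : ℕ :=
  if x = allOnes n then n
  else k * leadBlocks k n x + (k - 1 - blockOnes k n x (leadBlocks k n x))

/-- Bitwise mutation with rate `1/n`: each bit is flipped independently with
probability `1/n`. -/
def mutatePMF (n : ℕ) (x : BitStr n) : PMF (BitStr n) :=
  PMF.ofFintype
    (fun y => ∏ i, if y i = x i then 1 - (n : ℝ≥0∞)⁻¹ else (n : ℝ≥0∞)⁻¹)
    (by
      classical
      have key := (Fintype.prod_sum
        (fun (i : Fin n) (b : Bool) => if b = x i then 1 - (n : ℝ≥0∞)⁻¹ else (n : ℝ≥0∞)⁻¹)).symm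
      rw [key]
      refine Finset.prod_eq_one fun i _ => ?_
      have h1 : (1 : ℝ≥0∞) ≤ (n : ℝ≥0∞) := by exact_mod_cast i.pos
      have hinv : (n : ℝ≥0∞)⁻¹ ≤ 1 := ENNReal.inv_le_one.mpr h1
      rcases Bool.eq_false_or_eq_true (x i) with hx | hx <;>
        simp [Fintype.sum_bool, hx, tsub_add_cancel_of_le hinv, add_tsub_cancel_of_le hinv])

/-- The probability of an event `E` under a probability mass function `p`. -/
def prOf {α : Type*} (p : PMF α) (E : Set α) : ℝ≥0∞ :=
  ∑' a, E.indicator (fun a => p a) a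

/-- The Hamming-distance-1 neighbourhood of `x`. -/
def nbhd (n : ℕ) (x : BitStr n) : Finset (BitStr n) :=
  Finset.univ.image fun i : Fin n => Function.update x i (!x i)

/-- Best-improvement local search with uniformly random tie-breaking, with fuel:
as long as some Hamming-distance-1 neighbour has a strictly larger `f`-value, move
to a uniformly random neighbour of maximal `f`-value. -/
def lsAux (n : ℕ) (f : BitStr n → ℕ) : ℕ → BitStr n → PMF (BitStr n)
  | 0, x => PMF.pure x
  | m + 1, x =>
    if h : ∃ y ∈ nbhd n x, f x < f y then
      (PMF.uniformOfFinset
          ((nbhd n x).filter fun y => ∀ z ∈ nbhd n x, f z ≤ f y)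
          (by
            obtain ⟨y, hy, -⟩ := h
            obtain ⟨b, hb, hmax⟩ := Finset.exists_max_image (nbhd n x) f ⟨y, hy⟩
            exact ⟨b, Finset.mem_filter.mpr ⟨hb, hmax⟩⟩)).bind
        (lsAux n f m)
    else PMF.pure x

/-- Best-improvement local search on `dlb k n` started at `x`.  Since every step
strictly increases the `dlb`-value, which is bounded by `n + k - 1`, the fuel
`n + k + 1` is never exhausted, so this is exactly best-improvement local search,
terminating at a local optimum. -/
def localSearch (k n : ℕ) (x : BitStr n) : PMF (BitStr n) :=
  lsAux n (dlb k n) (n + k + 1) x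

/-- One iteration of the Lamarckian (1+1) EA on `dlb k n`: mutate, apply
best-improvement local search to the offspring, accept the locally improved
offspring if it is at least as fit as the parent; the flag records whether the
all-ones string has been generated (by mutation or local search). -/
def lamarckStep (k n : ℕ) (s : BitStr n × Bool) : PMF (BitStr n × Bool) :=
  (mutatePMF n s.1).bind fun y =>
    (localSearch k n y).map fun y' =>
      (if dlb k n s.1 ≤ dlb k n y' then y' else s.1,
       if s.2 = true ∨ y = allOnes n ∨ y' = allOnes n then true else false)

/-- The state distribution of the Lamarckian (1+1) EA on `dlb k n` after `t`
iterations; the initial individual is uniformly random and immediately replaced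
by the result of local search. -/
def lamarckDist (k n : ℕ) : ℕ → PMF (BitStr n × Bool)
  | 0 => (PMF.uniformOfFintype (BitStr n)).bind fun x0 =>
      (localSearch k n x0).map fun x =>
        (x, if x0 = allOnes n ∨ x = allOnes n then true else false)
  | t + 1 => (lamarckDist k n t).bind (lamarckStep k n)

/-- The expected runtime (expected number of iterations until the all-ones string
is first generated) of the Lamarckian (1+1) EA on `dlb k n`. -/
def lamarckERT (k n : ℕ) : ℝ≥0∞ :=
  ∑' t : ℕ, prOf (lamarckDist k n t) {s | s.2 = false}

section BlockLemmas

variable {k n : ℕ}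

lemma card_filter_interval (n a b : ℕ) :
    (Finset.univ.filter fun i : Fin n => a ≤ i.1 ∧ i.1 < b).card = min b n - a := by
  classical
  have h : (Finset.univ.filter fun i : Fin n => a ≤ i.1 ∧ i.1 < b) =
      (Finset.Ico a (min b n)).attachFin (fun m hm => by
        have := (Finset.mem_Ico.mp hm).2; omega) := by
    ext i
    simp only [Finset.mem_filter, Finset.mem_univ, true_and, Finset.mem_attachFin,
      Finset.mem_Ico]
    have := i.2
    omega
  rw [h, Finset.card_attachFin, Nat.card_Ico]

lemma blockOnes_le (x : BitStr n) (ℓ : ℕ) : blockOnes k n x ℓ ≤ k := by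
  classical
  have h : (Finset.univ.filter fun i : Fin n => ℓ*k ≤ i.1 ∧ i.1 < ℓ*k + k ∧ x i = true)
      ⊆ Finset.univ.filter fun i : Fin n => ℓ*k ≤ i.1 ∧ i.1 < ℓ*k + k := by
    intro i hi
    simp only [Finset.mem_filter, Finset.mem_univ, true_and] at *
    tauto
  have h2 := Finset.card_le_card h
  rw [card_filter_interval] at h2
  unfold blockOnes
  omega

lemma blockOnes_congr {x y : BitStr n} {ℓ : ℕ}
    (h : ∀ i : Fin n, ℓ*k ≤ i.1 → i.1 < ℓ*k + k → x i = y i) :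
    blockOnes k n x ℓ = blockOnes k n y ℓ := by
  unfold blockOnes
  congr 1
  apply Finset.filter_congr
  intro i _
  constructor
  · rintro ⟨h1, h2, h3⟩; exact ⟨h1, h2, by rw [← h i h1 h2]; exact h3⟩
  · rintro ⟨h1, h2, h3⟩; exact ⟨h1, h2, by rw [h i h1 h2]; exact h3⟩

lemma blockOnes_update_out {x : BitStr n} {ℓ : ℕ} {i : Fin n} (b : Bool)
    (h : i.1 < ℓ*k ∨ ℓ*k + k ≤ i.1) :
    blockOnes k n (Function.update x i b) ℓ = blockOnes k n x ℓ := by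
  apply blockOnes_congr
  intro j h1 h2
  have hji : j ≠ i := by
    intro hji; subst hji; omega
  rw [Function.update_of_ne hji]

lemma eq_false_of_blockOnes_zero {x : BitStr n} {ℓ : ℕ} (h : blockOnes k n x ℓ = 0)
    {i : Fin n} (h1 : ℓ*k ≤ i.1) (h2 : i.1 < ℓ*k + k) : x i = false := by
  classical
  unfold blockOnes at h
  rw [Finset.card_eq_zero] at h
  cases hx : x i
  · rfl
  · exfalso
    have : i ∈ (∅ : Finset (Fin n)) := by
      rw [← h]
      simp only [Finset.mem_filter, Finset.mem_univ, true_and]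
      exact ⟨h1, h2, hx⟩
    simp at this

lemma eq_true_of_blockOnes_k {x : BitStr n} {ℓ : ℕ} (hn : ℓ*k + k ≤ n)
    (h : blockOnes k n x ℓ = k) {i : Fin n} (h1 : ℓ*k ≤ i.1) (h2 : i.1 < ℓ*k + k) :
    x i = true := by
  classical
  have hsub : (Finset.univ.filter fun j : Fin n => ℓ*k ≤ j.1 ∧ j.1 < ℓ*k + k ∧ x j = true)
      ⊆ Finset.univ.filter fun j : Fin n => ℓ*k ≤ j.1 ∧ j.1 < ℓ*k + k := by
    intro j hj
    simp only [Finset.mem_filter, Finset.mem_univ, true_and] at *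
    tauto
  have hcard : (Finset.univ.filter fun j : Fin n => ℓ*k ≤ j.1 ∧ j.1 < ℓ*k + k).card = k := by
    rw [card_filter_interval]; omega
  have heq := Finset.eq_of_subset_of_card_le hsub (by
    rw [hcard]
    unfold blockOnes at h
    omega)
  have : i ∈ (Finset.univ.filter fun j : Fin n => ℓ*k ≤ j.1 ∧ j.1 < ℓ*k + k ∧ x j = true) := by
    rw [heq]
    simp only [Finset.mem_filter, Finset.mem_univ, true_and]
    exact ⟨h1, h2⟩
  simp only [Finset.mem_filter, Finset.mem_univ, true_and] at this
  exact this.2.2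

lemma exists_true_of_blockOnes_pos {x : BitStr n} {ℓ : ℕ} (h : 0 < blockOnes k n x ℓ) :
    ∃ i : Fin n, ℓ*k ≤ i.1 ∧ i.1 < ℓ*k + k ∧ x i = true := by
  classical
  unfold blockOnes at h
  obtain ⟨i, hi⟩ := Finset.card_pos.mp h
  simp only [Finset.mem_filter, Finset.mem_univ, true_and] at hi
  exact ⟨i, hi⟩

lemma blockOnes_update_true {x : BitStr n} {ℓ : ℕ} {i : Fin n}
    (h1 : ℓ*k ≤ i.1) (h2 : i.1 < ℓ*k + k) (hx : x i = false) :
    blockOnes k n (Function.update x i true) ℓ = blockOnes k n x ℓ + 1 := by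
  classical
  unfold blockOnes
  have h : (Finset.univ.filter fun j : Fin n =>
        ℓ*k ≤ j.1 ∧ j.1 < ℓ*k + k ∧ Function.update x i true j = true)
      = insert i (Finset.univ.filter fun j : Fin n => ℓ*k ≤ j.1 ∧ j.1 < ℓ*k + k ∧ x j = true) := by
    ext j
    simp only [Finset.mem_filter, Finset.mem_univ, true_and, Finset.mem_insert]
    by_cases hj : j = i
    · subst hj
      simp [h1, h2]
    · rw [Function.update_of_ne hj]
      tauto
  rw [h, Finset.card_insert_of_notMem]
  simp only [Finset.mem_filter, Finset.mem_univ, true_and, not_and]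
  intro _ _ hxi
  rw [hx] at hxi
  exact Bool.noConfusion hxi

lemma blockOnes_update_false {x : BitStr n} {ℓ : ℕ} {i : Fin n}
    (h1 : ℓ*k ≤ i.1) (h2 : i.1 < ℓ*k + k) (hx : x i = true) :
    blockOnes k n x ℓ = blockOnes k n (Function.update x i false) ℓ + 1 := by
  classical
  have hupd : Function.update (Function.update x i false) i true = x := by
    funext j
    by_cases hj : j = i
    · subst hj; simp [hx]
    · simp [Function.update_of_ne hj]
  conv_lhs => rw [← hupd]
  rw [blockOnes_update_true h1 h2 (by simp)]

end BlockLemmas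
section LeadLemmas

variable {k n : ℕ}

lemma blockOnes_of_lt_leadBlocks {x : BitStr n} {ℓ : ℕ} (h : ℓ < leadBlocks k n x) :
    blockOnes k n x ℓ = k := by
  unfold leadBlocks at h
  exact Nat.findGreatest_spec (P := fun j => ∀ ℓ < j, blockOnes k n x ℓ = k)
    (Nat.zero_le (n/k)) (fun ℓ h => absurd h (Nat.not_lt_zero ℓ)) ℓ h

lemma leadBlocks_le (x : BitStr n) : leadBlocks k n x ≤ n / k := Nat.findGreatest_le _

lemma leadBlocks_eq_of {x : BitStr n} {L : ℕ} (hL : L ≤ n / k)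
    (h1 : ∀ ℓ < L, blockOnes k n x ℓ = k) (h2 : blockOnes k n x L ≠ k) :
    leadBlocks k n x = L := by
  apply le_antisymm
  · by_contra hlt
    push_neg at hlt
    exact h2 (blockOnes_of_lt_leadBlocks hlt)
  · exact Nat.le_findGreatest hL h1

lemma blockOnes_allOnes (hd : k ∣ n) {ℓ : ℕ} (hℓ : ℓ < n / k) :
    blockOnes k n (allOnes n) ℓ = k := by
  classical
  have hb : ℓ*k + k ≤ n := by
    have h := Nat.mul_le_mul_right k hℓ
    rw [Nat.succ_mul] at h
    -- h : ℓ*k + k ≤ (n/k)*k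
    have h2 : (n/k)*k = n := Nat.div_mul_cancel hd
    omega
  have e : (Finset.univ.filter fun i : Fin n => ℓ*k ≤ i.1 ∧ i.1 < ℓ*k+k ∧ allOnes n i = true) =
      Finset.univ.filter fun i : Fin n => ℓ*k ≤ i.1 ∧ i.1 < ℓ*k+k := by
    apply Finset.filter_congr
    intro i _
    simp [allOnes]
  unfold blockOnes
  rw [e, card_filter_interval]
  omega

lemma leadBlocks_allOnes (hd : k ∣ n) : leadBlocks k n (allOnes n) = n / k := by
  apply le_antisymm (leadBlocks_le _)
  exact Nat.le_findGreatest le_rfl (fun ℓ hℓ => blockOnes_allOnes hd hℓ)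

lemma eq_allOnes_of_leadBlocks (hk : 0 < k) (hd : k ∣ n) {x : BitStr n}
    (h : leadBlocks k n x = n / k) : x = allOnes n := by
  funext i
  have hik : i.1 / k < n / k := Nat.div_lt_div_of_lt_of_dvd hd i.2
  have hfull : blockOnes k n x (i.1 / k) = k :=
    blockOnes_of_lt_leadBlocks (by rw [h]; exact hik)
  have hmod := Nat.div_add_mod i.1 k
  have hmlt := Nat.mod_lt i.1 hk
  have hbound : (i.1/k) * k + k ≤ n := by
    have h2 := Nat.mul_le_mul_right k hik
    rw [Nat.succ_mul] at h2
    have h3 : (n/k)*k = n := Nat.div_mul_cancel hd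
    omega
  have hc : (i.1/k)*k = k*(i.1/k) := Nat.mul_comm _ _
  have := eq_true_of_blockOnes_k hbound hfull (i := i) (by omega) (by omega)
  rw [this]; rfl

lemma leadBlocks_lt (hk : 0 < k) (hd : k ∣ n) {x : BitStr n} (hx : x ≠ allOnes n) :
    leadBlocks k n x < n/k :=
  lt_of_le_of_ne (leadBlocks_le x) (fun h => hx (eq_allOnes_of_leadBlocks hk hd h))

lemma ne_allOnes_of_leadBlocks_lt (hd : k ∣ n) {x : BitStr n}
    (h : leadBlocks k n x < n/k) : x ≠ allOnes n := by
  intro hx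
  rw [hx, leadBlocks_allOnes hd] at h
  omega

lemma blockOnes_leadBlocks_lt (hk : 0 < k) (hd : k ∣ n) {x : BitStr n} (hx : x ≠ allOnes n) :
    blockOnes k n x (leadBlocks k n x) < k := by
  have hlt := leadBlocks_lt hk hd hx
  rcases lt_or_eq_of_le (blockOnes_le x (leadBlocks k n x)) with h | h
  · exact h
  exfalso
  have hP : ∀ ℓ < leadBlocks k n x + 1, blockOnes k n x ℓ = k := by
    intro ℓ hℓ
    rcases Nat.lt_succ_iff_lt_or_eq.mp hℓ with h' | h'
    · exact blockOnes_of_lt_leadBlocks h'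
    · subst h'; exact h
  have hge : leadBlocks k n x + 1 ≤ leadBlocks k n x := by
    unfold leadBlocks
    exact Nat.le_findGreatest hlt hP
  omega

lemma dlb_eq {x : BitStr n} (hx : x ≠ allOnes n) :
    dlb k n x = k * leadBlocks k n x + (k - 1 - blockOnes k n x (leadBlocks k n x)) := by
  unfold dlb
  rw [if_neg hx]

lemma dlb_allOnes : dlb k n (allOnes n) = n := by
  unfold dlb
  rw [if_pos rfl]

lemma dlb_le (hk : 0 < k) (hd : k ∣ n) (x : BitStr n) : dlb k n x ≤ n := by
  by_cases hx : x = allOnes n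
  · rw [hx, dlb_allOnes]
  · rw [dlb_eq hx]
    have h1 := leadBlocks_lt hk hd hx
    have h2 := Nat.mul_le_mul_left k h1
    rw [Nat.mul_succ] at h2
    have h3 : k*(n/k) = n := Nat.mul_div_cancel' hd
    omega

lemma dlb_lower {x : BitStr n} (hx : x ≠ allOnes n) :
    k * leadBlocks k n x ≤ dlb k n x := by
  rw [dlb_eq hx]; omega

lemma dlb_upper {x : BitStr n} (hx : x ≠ allOnes n) :
    dlb k n x ≤ k * leadBlocks k n x + (k-1) := by
  rw [dlb_eq hx]; omega

lemma leadBlocks_mono (hk : 0 < k) {x y : BitStr n} (hx : x ≠ allOnes n) (hy : y ≠ allOnes n)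
    (h : dlb k n x ≤ dlb k n y) : leadBlocks k n x ≤ leadBlocks k n y := by
  have h1 := dlb_lower (k := k) hx
  have h2 := dlb_upper (k := k) hy
  have h3 : k * leadBlocks k n x < k * (leadBlocks k n y + 1) := by
    rw [Nat.mul_succ]; omega
  have := Nat.lt_of_mul_lt_mul_left h3
  omega

lemma leadBlocks_succ_le (hk : 0 < k) {x : BitStr n} {L : ℕ} (hx : x ≠ allOnes n)
    (h : k * (L+1) ≤ dlb k n x) : L + 1 ≤ leadBlocks k n x := by
  have h2 := dlb_upper (k := k) hx
  have h3 : k * (L+1) < k * (leadBlocks k n x + 1) := by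
    rw [Nat.mul_succ, Nat.mul_succ] at *
    omega
  have := Nat.lt_of_mul_lt_mul_left h3
  omega

lemma mem_nbhd {x y : BitStr n} :
    y ∈ nbhd n x ↔ ∃ i : Fin n, y = Function.update x i (!x i) := by
  unfold nbhd
  simp [Finset.mem_image, eq_comm]

end LeadLemmas
section LSLemmas

variable {k n : ℕ}

lemma uniformOfFinset_singleton {α : Type*} (a : α) (h : ({a} : Finset α).Nonempty) :
    PMF.uniformOfFinset ({a} : Finset α) h = PMF.pure a := by
  ext b
  rw [PMF.uniformOfFinset_apply, PMF.pure_apply]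
  by_cases hb : b = a <;> simp [hb]

lemma lsAux_mono (f : BitStr n → ℕ) :
    ∀ (m : ℕ) (x z : BitStr n), z ∈ (lsAux n f m x).support → f x ≤ f z := by
  intro m
  induction m with
  | zero =>
    intro x z hz
    rw [lsAux, PMF.support_pure] at hz
    rw [Set.mem_singleton_iff] at hz
    rw [hz]
  | succ m ih =>
    intro x z hz
    rw [lsAux] at hz
    split_ifs at hz with h
    · rw [PMF.support_bind] at hz
      simp only [Set.mem_iUnion, exists_prop] at hz
      obtain ⟨w, hw, hzw⟩ := hz
      rw [PMF.support_uniformOfFinset] at hw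
      have hw' := Finset.mem_filter.mp (by exact_mod_cast hw)
      obtain ⟨y, hy, hxy⟩ := h
      have hfw : f x < f w := lt_of_lt_of_le hxy (hw'.2 y hy)
      exact le_trans (le_of_lt hfw) (ih w z hzw)
    · rw [PMF.support_pure, Set.mem_singleton_iff] at hz
      rw [hz]

lemma lsAux_localopt (f : BitStr n → ℕ) (M : ℕ) (hM : ∀ w, f w ≤ M) :
    ∀ (m : ℕ) (x : BitStr n), M < f x + m →
      ∀ z ∈ (lsAux n f m x).support, ∀ y ∈ nbhd n z, f y ≤ f z := by
  intro m
  induction m with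
  | zero =>
    intro x hx
    exact absurd (hM x) (by omega)
  | succ m ih =>
    intro x hx z hz
    rw [lsAux] at hz
    split_ifs at hz with h
    · rw [PMF.support_bind] at hz
      simp only [Set.mem_iUnion, exists_prop] at hz
      obtain ⟨w, hw, hzw⟩ := hz
      rw [PMF.support_uniformOfFinset] at hw
      have hw' := Finset.mem_filter.mp (by exact_mod_cast hw)
      obtain ⟨y, hy, hxy⟩ := h
      have hfw : f x < f w := lt_of_lt_of_le hxy (hw'.2 y hy)
      exact ih w (by omega) z hzw
    · rw [PMF.support_pure, Set.mem_singleton_iff] at hz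
      subst hz
      intro y hy
      push_neg at h
      exact h y hy

lemma lsAux_step (f : BitStr n → ℕ) (m : ℕ) (x y₁ : BitStr n)
    (h1 : y₁ ∈ nbhd n x) (h2 : f x < f y₁)
    (h3 : ∀ z ∈ nbhd n x, z ≠ y₁ → f z < f y₁) :
    lsAux n f (m+1) x = lsAux n f m y₁ := by
  rw [lsAux, dif_pos ⟨y₁, h1, h2⟩]
  have hfilter : ((nbhd n x).filter fun y => ∀ z ∈ nbhd n x, f z ≤ f y) = {y₁} := by
    ext z
    simp only [Finset.mem_filter, Finset.mem_singleton]
    constructor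
    · rintro ⟨hz, hmax⟩
      by_contra hne
      exact absurd (hmax y₁ h1) (not_le.mpr (h3 z hz hne))
    · intro hzy
      rw [hzy]
      refine ⟨h1, fun w hw => ?_⟩
      by_cases hwe : w = y₁
      · rw [hwe]
      · exact le_of_lt (h3 w hw hwe)
  have congrU : ∀ (s t : Finset (BitStr n)) (hst : s = t) (hs : s.Nonempty),
      PMF.uniformOfFinset s hs = PMF.uniformOfFinset t (hst ▸ hs) := by
    intro s t hst hs; subst hst; rfl
  rw [congrU _ _ hfilter, uniformOfFinset_singleton, PMF.pure_bind]

lemma localSearch_localopt (hk : 0 < k) (hd : k ∣ n) (y z : BitStr n)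
    (hz : z ∈ (localSearch k n y).support) : ∀ w ∈ nbhd n z, dlb k n w ≤ dlb k n z :=
  lsAux_localopt (dlb k n) n (dlb_le hk hd) (n+k+1) y (by omega) z hz

lemma localSearch_mono (y z : BitStr n) (hz : z ∈ (localSearch k n y).support) :
    dlb k n y ≤ dlb k n z := lsAux_mono _ _ _ _ hz

end LSLemmas
section Success

variable {k n : ℕ}

lemma critical_zero (hk2 : 2 ≤ k) (hd : k ∣ n) {x : BitStr n} (hx : x ≠ allOnes n)
    (hopt : ∀ y ∈ nbhd n x, dlb k n y ≤ dlb k n x) :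
    blockOnes k n x (leadBlocks k n x) = 0 := by
  have hk0 : 0 < k := by omega
  set L := leadBlocks k n x with hLdef
  by_contra hB
  have hBpos : 0 < blockOnes k n x L := Nat.pos_of_ne_zero hB
  have hBlt : blockOnes k n x L < k := blockOnes_leadBlocks_lt hk0 hd hx
  have hL : L < n / k := leadBlocks_lt hk0 hd hx
  obtain ⟨i, hi1, hi2, hi3⟩ := exists_true_of_blockOnes_pos hBpos
  set y : BitStr n := Function.update x i false with hydef
  have hynb : y ∈ nbhd n x := mem_nbhd.mpr ⟨i, by rw [hydef, hi3]; rfl⟩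
  have hyℓ : ∀ ℓ < L, blockOnes k n y ℓ = k := by
    intro ℓ hℓ
    rw [hydef, blockOnes_update_out false (Or.inr (by
      have h := Nat.mul_le_mul_right k hℓ
      rw [Nat.succ_mul] at h
      omega))]
    exact blockOnes_of_lt_leadBlocks hℓ
  have hyB : blockOnes k n x L = blockOnes k n y L + 1 :=
    blockOnes_update_false hi1 hi2 hi3
  have hylead : leadBlocks k n y = L :=
    leadBlocks_eq_of (le_of_lt hL) hyℓ (by omega)
  have hyne : y ≠ allOnes n := ne_allOnes_of_leadBlocks_lt hd (by omega)
  have := hopt y hynb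
  rw [dlb_eq hyne, dlb_eq hx, hylead, ← hLdef] at this
  omega

lemma success (hk2 : 2 ≤ k) (hn : 0 < n) (hd : k ∣ n) {x : BitStr n} (hx : x ≠ allOnes n)
    (hopt : ∀ y ∈ nbhd n x, dlb k n y ≤ dlb k n x) :
    ∃ y₀ : BitStr n,
      ((n:ℝ≥0∞)⁻¹)^(k-1) * (1 - (n : ℝ≥0∞)⁻¹)^n ≤ mutatePMF n x y₀ ∧
      ∀ z ∈ (localSearch k n y₀).support, k * (leadBlocks k n x + 1) ≤ dlb k n z := by
  classical
  have hk0 : 0 < k := by omega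
  set L := leadBlocks k n x with hLdef
  have hL : L < n/k := leadBlocks_lt hk0 hd hx
  have hzero : blockOnes k n x L = 0 := critical_zero hk2 hd hx hopt
  have hnk : (n/k)*k = n := Nat.div_mul_cancel hd
  have hbound : L*k + k ≤ n := by
    have h := Nat.mul_le_mul_right k hL
    rw [Nat.succ_mul] at h
    omega
  have hxblock : ∀ i : Fin n, L*k ≤ i.1 → i.1 < L*k + k → x i = false :=
    fun i h1 h2 => eq_false_of_blockOnes_zero hzero h1 h2
  set y₀ : BitStr n := fun i => if L*k ≤ i.1 ∧ i.1 < L*k + (k-1) then true else x i with hy₀def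
  have hy₀S : ∀ i : Fin n, L*k ≤ i.1 → i.1 < L*k+(k-1) → y₀ i = true := by
    intro i h1 h2
    rw [hy₀def]
    exact if_pos ⟨h1, h2⟩
  have hy₀x : ∀ i : Fin n, ¬(L*k ≤ i.1 ∧ i.1 < L*k+(k-1)) → y₀ i = x i := by
    intro i h
    rw [hy₀def]
    exact if_neg h
  have histar : L*k + (k-1) < n := by omega
  set istar : Fin n := ⟨L*k + (k-1), histar⟩ with histardef
  have hy₀istar : y₀ istar = false := by
    rw [hy₀x istar (by simp [histardef]), hxblock istar (by simp [histardef]) (by simp [histardef]; omega)]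
  set y₁ : BitStr n := Function.update y₀ istar true with hy₁def
  -- blocks below L agree with x for y₀
  have hy₀ℓ : ∀ ℓ < L, blockOnes k n y₀ ℓ = k := by
    intro ℓ hℓ
    have hup : ℓ*k + k ≤ L*k := by
      have h := Nat.mul_le_mul_right k hℓ
      rw [Nat.succ_mul] at h
      omega
    rw [blockOnes_congr (y := x) (fun i h1 h2 => (hy₀x i (by omega)).symm ▸ rfl)]
    · exact blockOnes_of_lt_leadBlocks hℓ
  have hBy₀ : blockOnes k n y₀ L = k - 1 := by
    have he : (Finset.univ.filter fun i : Fin n => L*k ≤ i.1 ∧ i.1 < L*k+k ∧ y₀ i = true)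
        = Finset.univ.filter fun i : Fin n => L*k ≤ i.1 ∧ i.1 < L*k + (k-1) := by
      ext i
      simp only [Finset.mem_filter, Finset.mem_univ, true_and]
      constructor
      · rintro ⟨h1, h2, h3⟩
        refine ⟨h1, ?_⟩
        by_contra hcon
        push_neg at hcon
        rw [hy₀x i (by omega), hxblock i h1 h2] at h3
        exact Bool.noConfusion h3
      · rintro ⟨h1, h2⟩
        exact ⟨h1, by omega, hy₀S i h1 h2⟩
    unfold blockOnes
    rw [he, card_filter_interval]
    omega
  have hLy₀ : leadBlocks k n y₀ = L := leadBlocks_eq_of (le_of_lt hL) hy₀ℓ (by omega)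
  have hy₀ne : y₀ ≠ allOnes n := ne_allOnes_of_leadBlocks_lt hd (by omega)
  have hdlby₀ : dlb k n y₀ = k*L := by
    rw [dlb_eq hy₀ne, hLy₀]
    omega
  -- y₁ facts
  have hy₁nb : y₁ ∈ nbhd n y₀ := mem_nbhd.mpr ⟨istar, by rw [hy₁def, hy₀istar]; rfl⟩
  have histar1 : L*k ≤ istar.1 := by simp [histardef]
  have histar2 : istar.1 < L*k + k := by simp [histardef]; omega
  have hy₁ℓ : ∀ ℓ < L + 1, blockOnes k n y₁ ℓ = k := by
    intro ℓ hℓ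
    rcases Nat.lt_succ_iff_lt_or_eq.mp hℓ with h' | h'
    · have hup : ℓ*k + k ≤ L*k := by
        have h := Nat.mul_le_mul_right k h'
        rw [Nat.succ_mul] at h
        omega
      rw [hy₁def, blockOnes_update_out true (Or.inr (by simp [histardef]; omega))]
      exact hy₀ℓ ℓ h'
    · subst h'
      rw [hy₁def, blockOnes_update_true histar1 histar2 hy₀istar, hBy₀]
      omega
  have hlead₁ : L + 1 ≤ leadBlocks k n y₁ := by
    unfold leadBlocks
    exact Nat.le_findGreatest hL hy₁ℓ
  have hdlb₁ : k * (L+1) ≤ dlb k n y₁ := by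
    by_cases hall : y₁ = allOnes n
    · rw [hall, dlb_allOnes]
      have h1 : k*(L+1) ≤ k*(n/k) := Nat.mul_le_mul_left k hL
      have h2 : k*(n/k) = (n/k)*k := Nat.mul_comm _ _
      omega
    · exact le_trans (Nat.mul_le_mul_left k hlead₁) (dlb_lower hall)
  have hdlb₀₁ : dlb k n y₀ < dlb k n y₁ := by
    rw [hdlby₀]
    have : k*L < k*(L+1) := by rw [Nat.mul_succ]; omega
    omega
  -- all other neighbours of y₀ are strictly worse than y₁
  have h3 : ∀ z ∈ nbhd n y₀, z ≠ y₁ → dlb k n z < dlb k n y₁ := by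
    intro z hz hne
    obtain ⟨j, rfl⟩ := mem_nbhd.mp hz
    have hzle : dlb k n (Function.update y₀ j (!y₀ j)) ≤ k*L + 1 := by
      rcases lt_or_ge j.1 (L*k) with hj | hj
      · -- j in an earlier block
        set m := j.1 / k with hmdef
        have hmod : k * m + j.1 % k = j.1 := by rw [hmdef]; exact Nat.div_add_mod j.1 k
        have hmlt := Nat.mod_lt j.1 hk0
        have hcomm : m*k = k*m := Nat.mul_comm _ _
        have hm1 : m*k ≤ j.1 := by omega
        have hmL : m < L := by
          by_contra hc
          push_neg at hc
          have := Nat.mul_le_mul_right k hc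
          omega
        have hm2 : j.1 < m*k + k := by omega
        have hmn : m*k + k ≤ n := by
          have h := Nat.mul_le_mul_right k (lt_trans hmL hL)
          rw [Nat.succ_mul] at h
          omega
        have hxj : x j = true :=
          eq_true_of_blockOnes_k hmn (blockOnes_of_lt_leadBlocks (by omega)) hm1 hm2
        have hyj : y₀ j = true := by
          rw [hy₀x j (by omega), hxj]
        rw [hyj]
        have hzℓ : ∀ ℓ < m, blockOnes k n (Function.update y₀ j (!true)) ℓ = k := by
          intro ℓ hℓ
          have hup : ℓ*k + k ≤ m*k := by
            have h := Nat.mul_le_mul_right k hℓ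
            rw [Nat.succ_mul] at h
            omega
          rw [blockOnes_update_out _ (Or.inr (by omega))]
          exact hy₀ℓ ℓ (lt_trans hℓ hmL)
        have hzB : blockOnes k n y₀ m = blockOnes k n (Function.update y₀ j false) m + 1 :=
          blockOnes_update_false hm1 hm2 hyj
        have hy₀m : blockOnes k n y₀ m = k := hy₀ℓ m hmL
        have hzlead : leadBlocks k n (Function.update y₀ j (!true)) = m := by
          apply leadBlocks_eq_of (by omega) hzℓ
          simp only [Bool.not_true]
          omega
        have hzne : Function.update y₀ j (!true) ≠ allOnes n :=
          ne_allOnes_of_leadBlocks_lt hd (by omega)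
        rw [dlb_eq hzne, hzlead]
        have : k*m + k ≤ k*L := by
          have h := Nat.mul_le_mul_left k hmL
          rw [Nat.mul_succ] at h
          omega
        omega
      · rcases lt_or_ge j.1 (L*k + (k-1)) with hj2 | hj2
        · -- j among the k-1 flipped positions
          have hyj : y₀ j = true := hy₀S j hj hj2
          rw [hyj]
          have hzℓ : ∀ ℓ < L, blockOnes k n (Function.update y₀ j (!true)) ℓ = k := by
            intro ℓ hℓ
            have hup : ℓ*k + k ≤ L*k := by
              have h := Nat.mul_le_mul_right k hℓ
              rw [Nat.succ_mul] at h
              omega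
            rw [blockOnes_update_out _ (Or.inr (by omega))]
            exact hy₀ℓ ℓ hℓ
          have hzB : blockOnes k n y₀ L = blockOnes k n (Function.update y₀ j false) L + 1 :=
            blockOnes_update_false hj (by omega) hyj
          have hzlead : leadBlocks k n (Function.update y₀ j (!true)) = L := by
            apply leadBlocks_eq_of (le_of_lt hL) hzℓ
            simp only [Bool.not_true]
            omega
          have hzne : Function.update y₀ j (!true) ≠ allOnes n :=
            ne_allOnes_of_leadBlocks_lt hd (by omega)
          rw [dlb_eq hzne, hzlead]
          simp only [Bool.not_true]
          omega
        · -- j = istar or j beyond the critical block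
          have hjistar : j ≠ istar := by
            intro hc
            subst hc
            rw [hy₀istar] at hne
            exact hne rfl
          have hjgt : L*k + k ≤ j.1 := by
            have : j.1 ≠ L*k + (k-1) := fun hc => hjistar (Fin.ext hc)
            omega
          have hzℓ : ∀ ℓ < L, blockOnes k n (Function.update y₀ j (!y₀ j)) ℓ = k := by
            intro ℓ hℓ
            have hup : ℓ*k + k ≤ L*k := by
              have h := Nat.mul_le_mul_right k hℓ
              rw [Nat.succ_mul] at h
              omega
            rw [blockOnes_update_out _ (Or.inr (by omega))]
            exact hy₀ℓ ℓ hℓ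
          have hzB : blockOnes k n (Function.update y₀ j (!y₀ j)) L = k - 1 := by
            rw [blockOnes_update_out _ (Or.inr (by omega))]
            exact hBy₀
          have hzlead : leadBlocks k n (Function.update y₀ j (!y₀ j)) = L :=
            leadBlocks_eq_of (le_of_lt hL) hzℓ (by omega)
          have hzne : Function.update y₀ j (!y₀ j) ≠ allOnes n :=
            ne_allOnes_of_leadBlocks_lt hd (by omega)
          rw [dlb_eq hzne, hzlead, hzB]
          omega
    have : k*L + 1 < k*(L+1) := by
      rw [Nat.mul_succ]
      omega
    omega
  -- local search from y₀ goes through y₁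
  have hls : localSearch k n y₀ = lsAux n (dlb k n) (n+k) y₁ := by
    unfold localSearch
    have : n + k + 1 = (n + k) + 1 := rfl
    rw [this, lsAux_step (dlb k n) (n+k) y₀ y₁ hy₁nb hdlb₀₁ h3]
  refine ⟨y₀, ?_, ?_⟩
  · -- probability bound
    rw [mutatePMF, PMF.ofFintype_apply]
    set S : Finset (Fin n) := Finset.univ.filter (fun i : Fin n => L*k ≤ i.1 ∧ i.1 < L*k + (k-1)) with hS
    have hSmem : ∀ i : Fin n, i ∈ S ↔ (L*k ≤ i.1 ∧ i.1 < L*k + (k-1)) := by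
      intro i
      rw [hS]
      simp
    have hScard : S.card = k - 1 := by
      rw [hS, card_filter_interval]
      omega
    have hcongr : ∀ i : Fin n, (if y₀ i = x i then 1 - (n : ℝ≥0∞)⁻¹ else (n : ℝ≥0∞)⁻¹)
        = if i ∈ S then (n:ℝ≥0∞)⁻¹ else 1 - (n:ℝ≥0∞)⁻¹ := by
      intro i
      by_cases hi : i ∈ S
      · rw [if_pos hi]
        have hi' := (hSmem i).mp hi
        have h1 : y₀ i = true := hy₀S i hi'.1 hi'.2
        have h2 : x i = false := hxblock i hi'.1 (by omega)
        rw [h1, h2]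
        simp
      · rw [if_neg hi]
        rw [hy₀x i (by rw [← hSmem]; exact hi)]
        simp
    rw [Finset.prod_congr rfl (fun i _ => hcongr i)]
    rw [← Finset.prod_filter_mul_prod_filter_not Finset.univ (· ∈ S)]
    have h1 : (∏ i ∈ Finset.univ.filter (· ∈ S),
        (if i ∈ S then (n:ℝ≥0∞)⁻¹ else 1 - (n:ℝ≥0∞)⁻¹)) = ((n:ℝ≥0∞)⁻¹)^(k-1) := by
      rw [Finset.prod_congr rfl (fun i hi => if_pos (Finset.mem_filter.mp hi).2),
        Finset.prod_const, Finset.filter_mem_eq_inter, Finset.univ_inter, hScard]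
    have h2 : (∏ i ∈ Finset.univ.filter (· ∉ S),
        (if i ∈ S then (n:ℝ≥0∞)⁻¹ else 1 - (n:ℝ≥0∞)⁻¹)) = (1 - (n:ℝ≥0∞)⁻¹)^(n-(k-1)) := by
      rw [Finset.prod_congr rfl (fun i hi => if_neg (Finset.mem_filter.mp hi).2),
        Finset.prod_const]
      congr 1
      rw [Finset.filter_not, Finset.filter_mem_eq_inter, Finset.univ_inter,
        Finset.card_sdiff_of_subset (Finset.subset_univ S), Finset.card_univ, Fintype.card_fin, hScard]
    rw [h1, h2]
    apply mul_le_mul_right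
    apply pow_le_pow_of_le_one zero_le tsub_le_self
    omega
  · -- local search conclusion
    intro z hz
    rw [hls] at hz
    exact le_trans hdlb₁ (lsAux_mono _ _ _ _ hz)

end Success
section Analysis

lemma one_sub_inv_pow_ge {n : ℕ} (hn : 2 ≤ n) :
    (16 : ℝ≥0∞)⁻¹ ≤ (1 - (n:ℝ≥0∞)⁻¹)^n := by
  have hnR : (2:ℝ) ≤ (n:ℝ) := by exact_mod_cast hn
  have hnpos : (0:ℝ) < n := by linarith
  have hreal : (1/16 : ℝ) ≤ (1 - 1/(n:ℝ))^n := by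
    set m := (n+1)/2 with hm
    have hm1 : n ≤ 2*m := by omega
    have hm2 : 4*m ≤ 3*n := by omega
    have ha0 : (0:ℝ) ≤ 1 - 1/n := by
      rw [sub_nonneg, div_le_one hnpos]
      linarith
    have ha1 : (1 - 1/(n:ℝ)) ≤ 1 := by
      have : (0:ℝ) ≤ 1/n := by positivity
      linarith
    have hber : (1 : ℝ) - m * (1/n) ≤ (1 - 1/n)^m := by
      have hneg2 : (-2:ℝ) ≤ -(1/n) := by
        have h1 : (1:ℝ)/n ≤ 1 := by rw [div_le_one hnpos]; linarith
        linarith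
      have := one_add_mul_le_pow hneg2 m
      calc (1:ℝ) - m * (1/n) = 1 + m * (-(1/n)) := by ring
      _ ≤ (1 + -(1/n))^m := this
      _ = (1 - 1/n)^m := by ring_nf
    have hq : (1/4 : ℝ) ≤ 1 - m*(1/n) := by
      have hmn : 4 * (m:ℝ) ≤ 3 * (n:ℝ) := by exact_mod_cast hm2
      rw [mul_one_div, le_sub_comm, div_le_iff₀ hnpos]
      linarith
    have h4 : (1/4:ℝ) ≤ (1-1/n)^m := le_trans hq hber
    calc (1/16:ℝ) = (1/4)^2 := by norm_num
    _ ≤ ((1-1/n)^m)^2 := pow_le_pow_left₀ (by norm_num) h4 2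
    _ = (1-1/n)^(2*m) := by rw [← pow_mul, mul_comm]
    _ ≤ (1-1/n)^n := pow_le_pow_of_le_one ha0 ha1 hm1
  have ha0 : (0:ℝ) ≤ 1 - 1/n := by
    rw [sub_nonneg, div_le_one hnpos]
    linarith
  have h1 : (1 - (n:ℝ≥0∞)⁻¹) = ENNReal.ofReal (1 - 1/(n:ℝ)) := by
    rw [ENNReal.ofReal_sub _ (by positivity)]
    congr 1
    · simp
    · rw [one_div, ENNReal.ofReal_inv_of_pos hnpos]
      congr 1
      exact (ENNReal.ofReal_natCast n).symm ▸ rfl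
  rw [h1, ← ENNReal.ofReal_pow ha0]
  have h16 : (16:ℝ≥0∞)⁻¹ = ENNReal.ofReal (1/16) := by
    rw [one_div, ENNReal.ofReal_inv_of_pos (by norm_num)]
    norm_num
  rw [h16]
  exact ENNReal.ofReal_le_ofReal hreal

lemma tsum_bind_mul {α β : Type*} (p : PMF α) (f : α → PMF β) (h : β → ℝ≥0∞) :
    ∑' b, (p.bind f) b * h b = ∑' a, p a * ∑' b, (f a) b * h b := by
  simp only [PMF.bind_apply]
  rw [tsum_congr (fun b => (ENNReal.tsum_mul_right (a := h b) (f := fun a => p a * (f a) b)).symm)]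
  rw [ENNReal.tsum_comm]
  exact tsum_congr fun a => by
    rw [← ENNReal.tsum_mul_left]
    exact tsum_congr fun b => mul_assoc _ _ _

lemma tsum_map_mul {α β : Type*} (p : PMF α) (F : α → β) (h : β → ℝ≥0∞) :
    ∑' b, (p.map F) b * h b = ∑' a, p a * h (F a) := by
  rw [PMF.map, tsum_bind_mul]
  congr 1
  funext a
  congr 1
  classical
  have : ∀ b : β, (PMF.pure (F a) : PMF β) b * h b = (if b = F a then h (F a) else 0) := by
    intro b
    rw [PMF.pure_apply]
    by_cases hb : b = F a <;> simp [hb]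
  simp only [Function.comp_apply]
  rw [tsum_congr this, tsum_ite_eq]

end Analysis
section Drift

def LamInv (k n : ℕ) (s : BitStr n × Bool) : Prop :=
  (∀ y ∈ nbhd n s.1, dlb k n y ≤ dlb k n s.1) ∧ (s.2 = false → s.1 ≠ allOnes n)

def gfun (k n : ℕ) (p : ℝ≥0∞) (s : BitStr n × Bool) : ℝ≥0∞ :=
  if s.2 then 0 else ((n/k - leadBlocks k n s.1 : ℕ) : ℝ≥0∞) * p⁻¹

lemma tsum_pmf_mul_le {α : Type*} (q : PMF α) {h : α → ℝ≥0∞} {C : ℝ≥0∞}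
    (hb : ∀ a ∈ q.support, h a ≤ C) : ∑' a, q a * h a ≤ C := by
  calc ∑' a, q a * h a ≤ ∑' a, q a * C := by
        apply ENNReal.tsum_le_tsum
        intro a
        by_cases hs : a ∈ q.support
        · exact mul_le_mul_right (hb a hs) _
        · rw [(PMF.apply_eq_zero_iff _ _).mpr hs, zero_mul]
          exact zero_le
  _ = C := by rw [ENNReal.tsum_mul_right, PMF.tsum_coe, one_mul]

lemma drift_core {α : Type*} (μ : PMF α) (e : α → ℝ≥0∞) (a₀ : α) (δ C : ℝ≥0∞)
    (hδ : 1 ≤ μ a₀ * δ)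
    (h1 : ∀ a, e a ≤ C)
    (h2 : e a₀ + δ ≤ C) :
    (∑' a, μ a * e a) + 1 ≤ C := by
  classical
  calc (∑' a, μ a * e a) + 1 ≤ (∑' a, μ a * e a) + μ a₀ * δ := add_le_add_right hδ _
  _ = ∑' a, (μ a * e a + if a = a₀ then μ a₀ * δ else 0) := by
      rw [ENNReal.tsum_add, tsum_ite_eq]
  _ ≤ ∑' a, μ a * C := by
      apply ENNReal.tsum_le_tsum
      intro a
      by_cases ha : a = a₀
      · subst ha
        rw [if_pos rfl, ← mul_add]
        exact mul_le_mul_right h2 _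
      · rw [if_neg ha, add_zero]
        exact mul_le_mul_right (h1 a) _
  _ = C := by rw [ENNReal.tsum_mul_right, PMF.tsum_coe, one_mul]

lemma inv_lamarckDist {k n : ℕ} (hk2 : 2 ≤ k) (hd : k ∣ n) :
    ∀ t s, s ∈ (lamarckDist k n t).support → LamInv k n s := by
  intro t
  induction t with
  | zero =>
    intro s hs
    rw [lamarckDist, PMF.support_bind] at hs
    simp only [Set.mem_iUnion, exists_prop] at hs
    obtain ⟨x0, _, hs⟩ := hs
    rw [PMF.support_map] at hs
    obtain ⟨x, hx, rfl⟩ := hs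
    constructor
    · exact localSearch_localopt (by omega) hd x0 x hx
    · intro hflag hxall
      by_cases hcond : x0 = allOnes n ∨ x = allOnes n
      · simp only [if_pos hcond] at hflag
        exact Bool.noConfusion hflag
      · exact hcond (Or.inr hxall)
  | succ t ih =>
    intro s hs
    rw [lamarckDist, PMF.support_bind] at hs
    simp only [Set.mem_iUnion, exists_prop] at hs
    obtain ⟨s0, hs0, hs⟩ := hs
    have hinv0 := ih s0 hs0
    rw [lamarckStep, PMF.support_bind] at hs
    simp only [Set.mem_iUnion, exists_prop] at hs
    obtain ⟨y, _, hs⟩ := hs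
    rw [PMF.support_map] at hs
    obtain ⟨y', hy', rfl⟩ := hs
    constructor
    · dsimp only
      split_ifs with hacc
      · exact localSearch_localopt (by omega) hd y y' hy'
      · exact hinv0.1
    · intro hflag
      dsimp only at hflag ⊢
      by_cases hcond : s0.2 = true ∨ y = allOnes n ∨ y' = allOnes n
      · rw [if_pos hcond] at hflag
        exact Bool.noConfusion hflag
      · push_neg at hcond
        split_ifs with hacc
        · exact hcond.2.2
        · refine hinv0.2 ?_
          cases h2 : s0.2
          · rfl
          · exact absurd h2 hcond.1

lemma drift_le {k n : ℕ} (hk2 : 2 ≤ k) (hn : 0 < n) (hd : k ∣ n) {p : ℝ≥0∞}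
    (hp : p = ((n:ℝ≥0∞)⁻¹)^(k-1) * 16⁻¹) (s : BitStr n × Bool) (hs : LamInv k n s) :
    (∑' s', lamarckStep k n s s' * gfun k n p s') + (if s.2 then 0 else 1)
      ≤ gfun k n p s := by
  classical
  obtain ⟨x, b⟩ := s
  obtain ⟨hopt, hflag⟩ := hs
  dsimp only at hopt hflag
  cases b with
  | true =>
    have hzero : ∀ s' : BitStr n × Bool, lamarckStep k n (x, true) s' * gfun k n p s' = 0 := by
      intro s'
      by_cases hsup : s' ∈ (lamarckStep k n (x, true)).support
      · rw [lamarckStep, PMF.support_bind] at hsup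
        simp only [Set.mem_iUnion, exists_prop] at hsup
        obtain ⟨y, _, hsup⟩ := hsup
        rw [PMF.support_map] at hsup
        obtain ⟨y', _, rfl⟩ := hsup
        simp [gfun]
      · rw [(PMF.apply_eq_zero_iff _ _).mpr hsup, zero_mul]
    rw [ENNReal.tsum_eq_zero.mpr hzero]
    simp [gfun]
  | false =>
    have hxne : x ≠ allOnes n := hflag rfl
    obtain ⟨y₀, hpy₀, hy₀ls⟩ := success hk2 hn hd hxne hopt
    have hn2 : 2 ≤ n := le_trans hk2 (Nat.le_of_dvd hn hd)
    have hple : p ≤ mutatePMF n x y₀ := by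
      rw [hp]
      exact le_trans (mul_le_mul_right (one_sub_inv_pow_ge hn2) _) hpy₀
    have hntop : (n:ℝ≥0∞) ≠ ⊤ := ENNReal.natCast_ne_top n
    have hnne : (n:ℝ≥0∞) ≠ 0 := Nat.cast_ne_zero.mpr (by omega)
    have hp0 : p ≠ 0 := by
      rw [hp]
      exact mul_ne_zero (pow_ne_zero _ (ENNReal.inv_ne_zero.mpr hntop))
        (ENNReal.inv_ne_zero.mpr (by norm_num))
    have hptop : p ≠ ⊤ := by
      rw [hp]
      exact ENNReal.mul_ne_top (ENNReal.pow_ne_top (ENNReal.inv_ne_top.mpr hnne))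
        (ENNReal.inv_ne_top.mpr (by norm_num))
    have hpq : p * p⁻¹ = 1 := ENNReal.mul_inv_cancel hp0 hptop
    have hk0 : 0 < k := by omega
    have hL : leadBlocks k n x < n / k := leadBlocks_lt hk0 hd hxne
    have claim1 : ∀ y y' : BitStr n,
        gfun k n p (if dlb k n x ≤ dlb k n y' then y' else x,
          if false = true ∨ y = allOnes n ∨ y' = allOnes n then true else false)
          ≤ ((n/k - leadBlocks k n x : ℕ) : ℝ≥0∞) * p⁻¹ := by
      intro y y'
      by_cases hc : false = true ∨ y = allOnes n ∨ y' = allOnes n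
      · rw [if_pos hc]
        simp [gfun]
      · rw [if_neg hc]
        push_neg at hc
        have hy'ne : y' ≠ allOnes n := hc.2.2
        have hgf : gfun k n p (if dlb k n x ≤ dlb k n y' then y' else x, false)
            = ((n/k - leadBlocks k n (if dlb k n x ≤ dlb k n y' then y' else x) : ℕ) : ℝ≥0∞)
              * p⁻¹ := rfl
        rw [hgf]
        apply mul_le_mul_left
        apply Nat.cast_le.mpr
        have hz : leadBlocks k n x
            ≤ leadBlocks k n (if dlb k n x ≤ dlb k n y' then y' else x) := by
          split_ifs with hacc
          · exact leadBlocks_mono hk0 hxne hy'ne hacc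
          · exact le_rfl
        exact Nat.sub_le_sub_left hz _
    have claim2 : ∀ y' ∈ (localSearch k n y₀).support, ∀ y : BitStr n,
        gfun k n p (if dlb k n x ≤ dlb k n y' then y' else x,
          if false = true ∨ y = allOnes n ∨ y' = allOnes n then true else false)
          ≤ ((n/k - (leadBlocks k n x + 1) : ℕ) : ℝ≥0∞) * p⁻¹ := by
      intro y' hy' y
      by_cases hc : false = true ∨ y = allOnes n ∨ y' = allOnes n
      · rw [if_pos hc]
        simp [gfun]
      · rw [if_neg hc]
        push_neg at hc
        have hy'ne : y' ≠ allOnes n := hc.2.2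
        have hdlb : k * (leadBlocks k n x + 1) ≤ dlb k n y' := hy₀ls y' hy'
        have hacc : dlb k n x ≤ dlb k n y' := by
          have h1 := dlb_upper (k := k) hxne
          have h2 : k * (leadBlocks k n x + 1) = k * leadBlocks k n x + k := Nat.mul_succ k _
          omega
        rw [if_pos hacc]
        have hgf : gfun k n p (y', false)
            = ((n/k - leadBlocks k n y' : ℕ) : ℝ≥0∞) * p⁻¹ := rfl
        rw [hgf]
        apply mul_le_mul_left
        apply Nat.cast_le.mpr
        have hz : leadBlocks k n x + 1 ≤ leadBlocks k n y' :=
          leadBlocks_succ_le hk0 hy'ne hdlb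
        exact Nat.sub_le_sub_left hz _
    have hE : (∑' s', lamarckStep k n (x, false) s' * gfun k n p s')
        = ∑' y, mutatePMF n x y *
            ∑' y', localSearch k n y y' * gfun k n p
              (if dlb k n x ≤ dlb k n y' then y' else x,
               if false = true ∨ y = allOnes n ∨ y' = allOnes n then true else false) := by
      rw [lamarckStep, tsum_bind_mul]
      exact tsum_congr fun y => congrArg _ (tsum_map_mul _ _ _)
    have harith : ((n/k - (leadBlocks k n x + 1) : ℕ) : ℝ≥0∞) * p⁻¹ + p⁻¹
        = ((n/k - leadBlocks k n x : ℕ) : ℝ≥0∞) * p⁻¹ := by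
      have hnat : ((n/k - (leadBlocks k n x + 1) : ℕ) : ℝ≥0∞) + 1
          = ((n/k - leadBlocks k n x : ℕ) : ℝ≥0∞) := by
        have h : (n/k - (leadBlocks k n x + 1)) + 1 = n/k - leadBlocks k n x := by omega
        exact_mod_cast h
      rw [← hnat, add_mul, one_mul]
    have main : (∑' y, mutatePMF n x y *
          ∑' y', localSearch k n y y' * gfun k n p
            (if dlb k n x ≤ dlb k n y' then y' else x,
             if false = true ∨ y = allOnes n ∨ y' = allOnes n then true else false)) + 1
        ≤ ((n/k - leadBlocks k n x : ℕ) : ℝ≥0∞) * p⁻¹ := by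
      refine drift_core (mutatePMF n x) _ y₀ p⁻¹ _ ?_ ?_ ?_
      · rw [← hpq]
        exact mul_le_mul_left hple _
      · intro y
        exact tsum_pmf_mul_le _ (fun y' _ => claim1 y y')
      · refine le_trans (add_le_add_left
          (tsum_pmf_mul_le _ (fun y' hy' => claim2 y' hy' y₀)) _) (le_of_eq harith)
    calc (∑' s', lamarckStep k n (x, false) s' * gfun k n p s')
          + (if ((x, false) : BitStr n × Bool).2 then (0:ℝ≥0∞) else 1)
        = (∑' y, mutatePMF n x y *
            ∑' y', localSearch k n y y' * gfun k n p
              (if dlb k n x ≤ dlb k n y' then y' else x,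
               if false = true ∨ y = allOnes n ∨ y' = allOnes n then true else false)) + 1 := by
          rw [hE]
          rfl
      _ ≤ ((n/k - leadBlocks k n x : ℕ) : ℝ≥0∞) * p⁻¹ := main
      _ = gfun k n p (x, false) := rfl

end Drift
section Final

lemma prOf_false {n : ℕ} (p : PMF (BitStr n × Bool)) :
    prOf p {s | s.2 = false} = ∑' s, p s * (if s.2 then 0 else 1) := by
  unfold prOf
  apply tsum_congr
  intro s
  obtain ⟨z, c⟩ := s
  rw [Set.indicator_apply]
  cases c <;> simp [Set.mem_setOf_eq]

lemma G_step {k n : ℕ} (hk2 : 2 ≤ k) (hn : 0 < n) (hd : k ∣ n) {p : ℝ≥0∞}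
    (hp : p = ((n:ℝ≥0∞)⁻¹)^(k-1) * 16⁻¹) (t : ℕ) :
    (∑' s, lamarckDist k n (t+1) s * gfun k n p s)
      + prOf (lamarckDist k n t) {s | s.2 = false}
      ≤ ∑' s, lamarckDist k n t s * gfun k n p s := by
  rw [prOf_false]
  rw [show lamarckDist k n (t+1) = (lamarckDist k n t).bind (lamarckStep k n) from rfl]
  rw [tsum_bind_mul, ← ENNReal.tsum_add]
  apply ENNReal.tsum_le_tsum
  intro s
  rw [← mul_add]
  by_cases hs : s ∈ (lamarckDist k n t).support
  · exact mul_le_mul_right (drift_le hk2 hn hd hp s (inv_lamarckDist hk2 hd t s hs)) _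
  · rw [(PMF.apply_eq_zero_iff _ _).mpr hs, zero_mul, zero_mul]

lemma ert_bound {k n : ℕ} (hk2 : 2 ≤ k) (hn : 0 < n) (hd : k ∣ n) {p : ℝ≥0∞}
    (hp : p = ((n:ℝ≥0∞)⁻¹)^(k-1) * 16⁻¹) :
    lamarckERT k n ≤ ((n/k : ℕ) : ℝ≥0∞) * p⁻¹ := by
  have hG0 : (∑' s, lamarckDist k n 0 s * gfun k n p s) ≤ ((n/k : ℕ) : ℝ≥0∞) * p⁻¹ :=
    tsum_pmf_mul_le _ (fun s _ => by
      unfold gfun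
      split_ifs
      · exact zero_le
      · exact mul_le_mul_left (Nat.cast_le.mpr (Nat.sub_le _ _)) _)
  have hind : ∀ t, (∑ r ∈ Finset.range t, prOf (lamarckDist k n r) {s | s.2 = false})
      + (∑' s, lamarckDist k n t s * gfun k n p s)
      ≤ ((n/k : ℕ) : ℝ≥0∞) * p⁻¹ := by
    intro t
    induction t with
    | zero => simpa using hG0
    | succ t ih =>
      rw [Finset.sum_range_succ]
      calc (∑ r ∈ Finset.range t, prOf (lamarckDist k n r) {s | s.2 = false})
            + prOf (lamarckDist k n t) {s | s.2 = false}
            + (∑' s, lamarckDist k n (t+1) s * gfun k n p s)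
          = (∑ r ∈ Finset.range t, prOf (lamarckDist k n r) {s | s.2 = false})
            + ((∑' s, lamarckDist k n (t+1) s * gfun k n p s)
              + prOf (lamarckDist k n t) {s | s.2 = false}) := by ring
        _ ≤ (∑ r ∈ Finset.range t, prOf (lamarckDist k n r) {s | s.2 = false})
            + (∑' s, lamarckDist k n t s * gfun k n p s) :=
            add_le_add_right (G_step hk2 hn hd hp t) _
        _ ≤ _ := ih
  have hsum : ∀ t, (∑ r ∈ Finset.range t, prOf (lamarckDist k n r) {s | s.2 = false})
      ≤ ((n/k : ℕ) : ℝ≥0∞) * p⁻¹ := fun t => le_trans (le_add_right le_rfl) (hind t)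
  unfold lamarckERT
  rw [ENNReal.tsum_eq_iSup_sum]
  apply iSup_le
  intro F
  obtain ⟨m, hm⟩ := F.exists_nat_subset_range
  exact le_trans (Finset.sum_le_sum_of_subset hm) (hsum m)

end Final

/-- For every constant integer `k ≥ 2` there is a constant `C > 0` such that for
all positive integer multiples `n` of `k`, the expected runtime of the Lamarckian
(1+1) EA with best-improvement local search on `DLB_k` over `{0,1}^n` is at most
`C · n^k`. -/
theorem lamarck_ert_upper (k : ℕ) (hk : 2 ≤ k) :
    ∃ C : ℝ, 0 < C ∧ ∀ n : ℕ, 0 < n → k ∣ n →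
      lamarckERT k n ≤ ENNReal.ofReal C * (n : ℝ≥0∞) ^ k := by
  refine ⟨16, by norm_num, fun n hn hd => ?_⟩
  have h1 := ert_bound (n := n) hk hn hd (p := ((n:ℝ≥0∞)⁻¹)^(k-1) * 16⁻¹) rfl
  refine le_trans h1 ?_
  have hntop : (n:ℝ≥0∞) ≠ ⊤ := ENNReal.natCast_ne_top n
  have hnne : (n:ℝ≥0∞) ≠ 0 := Nat.cast_ne_zero.mpr (by omega)
  have hinv : (((n:ℝ≥0∞)⁻¹)^(k-1) * 16⁻¹)⁻¹ = (n:ℝ≥0∞)^(k-1) * 16 := by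
    rw [ENNReal.mul_inv (Or.inl (pow_ne_zero _ (ENNReal.inv_ne_zero.mpr hntop)))
      (Or.inl (ENNReal.pow_ne_top (ENNReal.inv_ne_top.mpr hnne)))]
    rw [ENNReal.inv_pow, inv_inv, inv_inv]
  rw [hinv]
  calc ((n/k : ℕ) : ℝ≥0∞) * ((n:ℝ≥0∞)^(k-1) * 16)
      ≤ (n:ℝ≥0∞) * ((n:ℝ≥0∞)^(k-1) * 16) := by
        apply mul_le_mul_left
        exact_mod_cast Nat.div_le_self n k
    _ = 16 * (n:ℝ≥0∞)^k := by
        have h2 : (n:ℝ≥0∞) * (n:ℝ≥0∞)^(k-1) = (n:ℝ≥0∞)^k := by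
          rw [← pow_succ']
          congr 1
          omega
        rw [← mul_assoc, h2, mul_comm]
    _ ≤ ENNReal.ofReal 16 * (n:ℝ≥0∞)^k := by
        apply mul_le_mul_left
        rw [show ENNReal.ofReal (16:ℝ) = (16:ℝ≥0∞) by norm_num]

end
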